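/- Let (X_t)_{t ∈ ℝ} be an ℝ^d-valued stochastic process on a probability space (Ω,ℱ,ℙ) with ℙ-almost surely continuous paths, and let P_T be a probability measure on ℝ such that Lebesgue measure is absolutely continuous with respect to P_T. Then X is stationary if and only if for every n ∈ ℕ and all t₁,…,tₙ ∈ ℝ the induced drift process (p^{(t₁,…,tₙ)}_τ, P_T) has no drift. -/

import Mathlib

/-!
For fixed times `t`, the law `p τ` of `(X_{t₁+τ}, …, X_{tₙ+τ})` depends continuously on `τ` in the
weak topology, by dominated convergence along the a.s. continuous paths. Since the weak topology
is Hausdorff, `{(σ, τ) | p σ = p τ}` is closed; absence of drift makes it `P_T ⊗ P_T`-co-null, hence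
Lebesgue-co-null on `ℝ²`, and a closed co-null set for a measure charging every open set is everything.
-/

open MeasureTheory ProbabilityTheory

/-- A stochastic process `(X_t)_{t ∈ ℝ}` is *stationary* if all its finite-dimensional
distributions are invariant under time shifts. -/
def Stationary {Ω 𝔛 : Type*} [MeasurableSpace Ω] [MeasurableSpace 𝔛]
    (P : Measure Ω) (X : ℝ → Ω → 𝔛) : Prop :=
  ∀ (n : ℕ) (t : Fin n → ℝ) (τ : ℝ),
    P.map (fun ω i => X (t i) ω) = P.map (fun ω i => X (t i + τ) ω)

theorem MeasureTheory.ProbabilityMeasure.continuous_map_of_ae_continuous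
    {Ω T E : Type*} [MeasurableSpace Ω] [TopologicalSpace T] [FirstCountableTopology T]
    [TopologicalSpace E] [MeasurableSpace E] [OpensMeasurableSpace E]
    (ν : ProbabilityMeasure Ω) {Y : T → Ω → E} (hY : ∀ t, AEMeasurable (Y t) ν)
    (hcont : ∀ᵐ ω ∂(ν : Measure Ω), Continuous fun t => Y t ω) :
    Continuous fun t => ν.map (hY t) := by
  refine ProbabilityMeasure.continuous_iff_forall_continuous_integral.2 fun f => ?_
  simp only [ProbabilityMeasure.toMeasure_map]
  have hf_meas : ∀ t, AEStronglyMeasurable (fun ω => f (Y t ω)) ν := fun t =>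
    (f.continuous.measurable.comp_aemeasurable (hY t)).aestronglyMeasurable
  simp_rw [fun t => integral_map (hY t) f.continuous.measurable.aestronglyMeasurable]
  exact continuous_of_dominated hf_meas (fun t => ae_of_all _ fun ω => f.norm_coe_le_norm _)
    (integrable_const ‖f‖) (hcont.mono fun ω hω => f.continuous.comp hω)

theorem Continuous.eq_of_ae_prod_eq {T Z : Type*} [TopologicalSpace T] [MeasurableSpace T]
    [TopologicalSpace Z] [T2Space Z] {μ : Measure T} [μ.IsOpenPosMeasure] [SFinite μ]
    {p : T → Z} (hp : Continuous p) (h : ∀ᵐ στ ∂(μ.prod μ), p στ.1 = p στ.2) (σ τ : T) :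
    p σ = p τ :=
  congrFun (((hp.comp continuous_fst).ae_eq_iff_eq (μ.prod μ) (hp.comp continuous_snd)).1 h) (σ, τ)

/-- Let `(X_t)_{t ∈ ℝ}` be an `ℝ^d`-valued stochastic process with `P`-a.s. continuous
paths and let `P_T` be a probability measure on `ℝ` such that Lebesgue measure is
absolutely continuous with respect to `P_T`. Then `X` is stationary iff for every `n`
and all `t₁, …, tₙ` the induced drift process `p^{(t₁,…,tₙ)}_τ = P∘(X_{t₁+τ},…,X_{tₙ+τ})⁻¹`
has no drift. -/
theorem stationary_iff_noDrift_of_continuous_paths {Ω : Type*} [MeasurableSpace Ω]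
    {d : ℕ} (P : Measure Ω) [IsProbabilityMeasure P] (X : ℝ → Ω → EuclideanSpace ℝ (Fin d))
    (hX : ∀ t, Measurable (X t))
    (hcont : ∀ᵐ ω ∂P, Continuous fun t => X t ω)
    (PT : Measure ℝ) [IsProbabilityMeasure PT] (hac : (volume : Measure ℝ) ≪ PT) :
    Stationary P X ↔
      ∀ (n : ℕ) (t : Fin n → ℝ),
        ∀ᵐ στ ∂(PT.prod PT),
          P.map (fun ω i => X (t i + στ.1) ω) = P.map (fun ω i => X (t i + στ.2) ω) := by
  refine ⟨fun hS n t => ae_of_all _ fun στ => by rw [← hS n t στ.1, ← hS n t στ.2], ?_⟩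
  intro hdrift n t τ
  let P' : ProbabilityMeasure Ω := ⟨P, inferInstance⟩
  have hY : ∀ τ, AEMeasurable (fun ω i => X (t i + τ) ω) P := fun τ =>
    (measurable_pi_lambda _ fun i => hX _).aemeasurable
  have hp : Continuous fun τ => P'.map (hY τ) :=
    P'.continuous_map_of_ae_continuous hY <| hcont.mono fun ω hω =>
      continuous_pi fun i => hω.comp (continuous_const_add (t i))
  have hae : ∀ᵐ στ ∂(volume.prod volume), P'.map (hY στ.1) = P'.map (hY στ.2) :=
    Filter.Eventually.mono ((hac.prod hac).ae_le (hdrift n t)) fun στ hστ => Subtype.ext hστ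
  have h0τ := congrArg ProbabilityMeasure.toMeasure (hp.eq_of_ae_prod_eq hae 0 τ)
  simp only [ProbabilityMeasure.toMeasure_map, add_zero] at h0τ
  exact h0τ
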